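/- Let G be a finite connected graph, {F_1, …, F_k} a c-partition of E(G), and e = uv ∈ F_i. Set U = ℓ_i(u), V = ℓ_i(v), so that E = UV is an edge of G_i = G/F_i. Then N_u(e|G) = ⋃_{X ∈ N_U(E|G_i)} V(X) and N_v(e|G) = ⋃_{X ∈ N_V(E|G_i)} V(X), where the unions are over all components X of G − F_i that are closer in G_i to U (respectively to V) than to the other endpoint. -/

import Mathlib

open SimpleGraph

noncomputable section

/-- The Djoković–Winkler relation `Θ` on the edges of a graph `G`:
edges `e = xy` and `f = ab` are related iff
`d(x,a) + d(y,b) ≠ d(x,b) + d(y,a)`. -/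
def theta {V : Type*} (G : SimpleGraph V) (e f : Sym2 V) : Prop :=
  e ∈ G.edgeSet ∧ f ∈ G.edgeSet ∧
    ∃ x y a b : V, e = s(x, y) ∧ f = s(a, b) ∧
      G.dist x a + G.dist y b ≠ G.dist x b + G.dist y a

/-- The quotient graph `G/F`: its vertices are the connected components of
`G − F`, two components being adjacent iff some vertex of one is adjacent in
`G` to some vertex of the other. -/
def quotientGraph {V : Type*} (G : SimpleGraph V) (F : Set (Sym2 V)) :
    SimpleGraph (G.deleteEdges F).ConnectedComponent where
  Adj X Y := X ≠ Y ∧ ∃ x y : V,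
    (G.deleteEdges F).connectedComponentMk x = X ∧
    (G.deleteEdges F).connectedComponentMk y = Y ∧ G.Adj x y
  symm := by
    constructor
    rintro X Y ⟨hne, x, y, hx, hy, hadj⟩
    exact ⟨hne.symm, y, x, hy, hx, hadj.symm⟩
  loopless := by
    constructor
    rintro X ⟨hne, -⟩
    exact hne rfl

/-- `F₁, …, F_k` is a partition of the edge set of `G`. -/
def IsEdgePartition {V : Type*} (G : SimpleGraph V) {k : ℕ}
    (F : Fin k → Set (Sym2 V)) : Prop :=
  (∀ i, F i ⊆ G.edgeSet) ∧ (∀ e ∈ G.edgeSet, ∃ i, e ∈ F i) ∧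
    (∀ i j, i ≠ j → Disjoint (F i) (F j))

/-- `F₁, …, F_k` is a c-partition of the edge set of `G`: a partition such
that every `Θ*`-class (class of the transitive closure of `Θ`) is contained
in some part. -/
def IsCPartition {V : Type*} (G : SimpleGraph V) {k : ℕ}
    (F : Fin k → Set (Sym2 V)) : Prop :=
  IsEdgePartition G F ∧
    ∀ e f : Sym2 V, Relation.TransGen (theta G) e f → ∀ i, e ∈ F i → f ∈ F i

/-- For an edge `e = uv`, `nW G w u v` is `n_u(e|(G,w))`, the sum of the
weights of the vertices strictly closer to `u` than to `v`. -/
def nW {V : Type*} (G : SimpleGraph V) (w : V → NNReal) (u v : V) : NNReal :=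
  ∑ᶠ x ∈ {x : V | G.dist x u < G.dist x v}, w x

/-- The Mostar index of a vertex-edge-weighted graph `(G, w, w')`. -/
def MostarW {V : Type*} (G : SimpleGraph V) (w : V → NNReal)
    (w' : Sym2 V → NNReal) : ℝ :=
  ∑ᶠ e ∈ G.edgeSet, (w' e : ℝ) *
    Sym2.lift ⟨fun u v => |((nW G w u v : ℝ)) - ((nW G w v u : ℝ))|,
      fun _ _ => abs_sub_comm _ _⟩ e

/-- The (unweighted) Mostar index of a graph `G`. -/
def Mostar {V : Type*} (G : SimpleGraph V) : ℝ :=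
  ∑ᶠ e ∈ G.edgeSet,
    Sym2.lift ⟨fun u v =>
      |((Nat.card {x : V | G.dist x u < G.dist x v} : ℝ)) -
        ((Nat.card {x : V | G.dist x v < G.dist x u} : ℝ))|,
      fun _ _ => abs_sub_comm _ _⟩ e

/-!
Let `F` be a `Θ`-closed edge set and `P` a geodesic from `x` to `y`. The potential
`cutPotential F P z = ∑_{d ∈ P, d ∈ F} (d(z, d₀) - d(z, d₁))` equals `-|P ∩ F|` at `x` and
`|P ∩ F|` at `y`. Across an edge `ww' ∉ F` it does not change, since no edge of `F` is in
relation `Θ` with `ww'`; across an edge of `F` it changes by at most `2`, because `Fᶜ` is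
`Θ`-closed as well and the potentials of `F` and `Fᶜ` add up to `d(z, x) - d(z, y)`. Hence every
`x`–`y` walk uses at least `|P ∩ F|` edges of `F`, and `d_{G/F}(ℓ x, ℓ y) = |P ∩ F|`.
If `uv ∈ F`, geodesics from `x` to `u` and to `v` use equally many edges of `Fᶜ`, so
`d(x, u) - d(x, v) = d_{G/F}(ℓ x, ℓ u) - d_{G/F}(ℓ x, ℓ v)`.
-/

section

open Walk

open scoped Classical

variable {V : Type*} {G : SimpleGraph V}

theorem theta_symm {e f : Sym2 V} : theta G e f → theta G f e := by
  rintro ⟨he, hf, x, y, a, b, rfl, rfl, hne⟩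
  refine ⟨hf, he, a, b, x, y, rfl, rfl, ?_⟩
  simp only [dist_comm (u := a), dist_comm (u := b)]
  omega

variable (G) in
def IsThetaClosed (F : Set (Sym2 V)) : Prop :=
  ∀ e f, theta G e f → e ∈ F → f ∈ F

theorem IsThetaClosed.compl {F : Set (Sym2 V)} (hF : IsThetaClosed G F) :
    IsThetaClosed G Fᶜ :=
  fun _ _ hef he hf => he (hF _ _ (theta_symm hef) hf)

theorem IsCPartition.isThetaClosed {k : ℕ} {F : Fin k → Set (Sym2 V)}
    (hF : IsCPartition G F) (i : Fin k) : IsThetaClosed G (F i) :=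
  fun e f hef he => hF.2 e f (.single hef) i he

def distDiff (z : V) (d : G.Dart) : ℤ :=
  G.dist z d.fst - G.dist z d.snd

theorem theta_of_distDiff_ne {w w' : V} (h : G.Adj w w') {d : G.Dart}
    (hd : distDiff w d ≠ distDiff w' d) : theta G s(w, w') d.edge := by
  refine ⟨h, d.edge_mem, w, w', d.fst, d.snd, rfl, rfl, ?_⟩
  unfold distDiff at hd
  omega

theorem distDiff_symm (z : V) (d : G.Dart) : distDiff z d.symm = -distDiff z d := by
  simp [distDiff]

def crossCount (F : Set (Sym2 V)) {a b : V} (W : G.Walk a b) : ℕ :=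
  W.edges.countP (· ∈ F)

theorem crossCount_cons (F : Set (Sym2 V)) {a b c : V} (h : G.Adj a b) (W : G.Walk b c) :
    crossCount F (cons h W) = (if s(a, b) ∈ F then 1 else 0) + crossCount F W := by
  simp [crossCount, List.countP_cons, add_comm]

theorem crossCount_append (F : Set (Sym2 V)) {a b c : V} (W : G.Walk a b) (W' : G.Walk b c) :
    crossCount F (W.append W') = crossCount F W + crossCount F W' := by
  simp [crossCount, List.countP_append]

theorem crossCount_concat (F : Set (Sym2 V)) {a b c : V} (W : G.Walk a b) (h : G.Adj b c) :
    crossCount F (W.concat h) = crossCount F W + if s(b, c) ∈ F then 1 else 0 := by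
  simp [crossCount, List.countP_append]

theorem crossCount_reverse (F : Set (Sym2 V)) {a b : V} (W : G.Walk a b) :
    crossCount F W.reverse = crossCount F W := by
  simp [crossCount, List.countP_reverse]

theorem crossCount_add_crossCount_compl (F : Set (Sym2 V)) {a b : V} (W : G.Walk a b) :
    crossCount F W + crossCount Fᶜ W = W.length := by
  simp [crossCount, ← W.length_edges, List.length_eq_countP_add_countP (· ∈ F)]

def cutPotential (F : Set (Sym2 V)) {x y : V} (P : G.Walk x y) (z : V) : ℤ :=
  (P.darts.map fun d => if d.edge ∈ F then distDiff z d else 0).sum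

variable {x y : V}

theorem cutPotential_cons (F : Set (Sym2 V)) {w : V} (h : G.Adj x w) (P : G.Walk w y)
    (z : V) : cutPotential F (cons h P) z =
      (if s(x, w) ∈ F then (G.dist z x : ℤ) - G.dist z w else 0) + cutPotential F P z :=
  rfl

theorem cutPotential_reverse (F : Set (Sym2 V)) (P : G.Walk x y) (z : V) :
    cutPotential F P.reverse z = -cutPotential F P z := by
  rw [cutPotential, cutPotential, darts_reverse, List.map_reverse, List.sum_reverse, List.sum_neg,
    List.map_map, List.map_map]
  refine congrArg List.sum (List.map_congr_left fun d _ => ?_)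
  simp only [Function.comp_apply, Dart.edge_symm, distDiff_symm]
  split_ifs <;> simp

theorem cutPotential_add_cutPotential_compl (F : Set (Sym2 V)) (P : G.Walk x y) (z : V) :
    cutPotential F P z + cutPotential Fᶜ P z = G.dist z x - G.dist z y := by
  induction P with
  | nil => simp [cutPotential]
  | @cons a b c h P ih =>
    rw [cutPotential_cons, cutPotential_cons]
    by_cases hab : s(a, b) ∈ F <;> simp [hab] <;> omega

theorem IsThetaClosed.cutPotential_eq_of_notMem {F : Set (Sym2 V)} (hF : IsThetaClosed G F)
    (P : G.Walk x y) {w w' : V} (h : G.Adj w w') (hww' : s(w, w') ∉ F) :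
    cutPotential F P w' = cutPotential F P w := by
  refine congrArg List.sum (List.map_congr_left fun d _ => ?_)
  split_ifs with hd
  · by_contra hne
    exact hww' (hF _ _ (theta_symm (theta_of_distDiff_ne h (Ne.symm hne))) hd)
  · rfl

theorem IsThetaClosed.cutPotential_sub_le {F : Set (Sym2 V)} (hF : IsThetaClosed G F)
    (P : G.Walk x y) {w w' : V} (h : G.Adj w w') :
    cutPotential F P w' - cutPotential F P w ≤ if s(w, w') ∈ F then 2 else 0 := by
  split_ifs with hww'
  · have hcompl := hF.compl.cutPotential_eq_of_notMem P h (not_not_intro hww')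
    have hw := cutPotential_add_cutPotential_compl F P w
    have hw' := cutPotential_add_cutPotential_compl F P w'
    have hx := h.symm.diff_dist_adj (u := x)
    have hy := h.diff_dist_adj (u := y)
    rw [dist_comm (u := w) (v := x), dist_comm (u := w) (v := y)] at hw
    rw [dist_comm (u := w') (v := x), dist_comm (u := w') (v := y)] at hw'
    omega
  · rw [hF.cutPotential_eq_of_notMem P h hww', sub_self]

theorem IsThetaClosed.cutPotential_sub_le_crossCount {F : Set (Sym2 V)} (hF : IsThetaClosed G F)
    (P : G.Walk x y) {a b : V} (W : G.Walk a b) :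
    cutPotential F P b - cutPotential F P a ≤ 2 * crossCount F W := by
  induction W with
  | nil => simp
  | cons h W ih =>
    have hstep := hF.cutPotential_sub_le P h
    rw [crossCount_cons]
    split_ifs at hstep ⊢ <;> push_cast <;> omega

theorem length_eq_dist_of_cons {w : V} {h : G.Adj x w} {P : G.Walk w y}
    (hP : (cons h P).length = G.dist x y) :
    P.length = G.dist w y ∧ G.dist x y = G.dist w y + 1 := by
  have htri := h.reachable.dist_triangle_left y
  have hPw := dist_le P
  rw [dist_eq_one_iff_adj.mpr h] at htri
  rw [length_cons] at hP
  omega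

theorem cutPotential_end_of_length_eq_dist (F : Set (Sym2 V)) {P : G.Walk x y}
    (hP : P.length = G.dist x y) : cutPotential F P y = crossCount F P := by
  induction P with
  | nil => simp [cutPotential, crossCount]
  | @cons x w y h P ih =>
    obtain ⟨hP', hstep⟩ := length_eq_dist_of_cons hP
    rw [cutPotential_cons, crossCount_cons, ih hP', dist_comm (u := y), dist_comm (u := y), hstep]
    split_ifs <;> push_cast <;> ring

theorem cutPotential_start_of_length_eq_dist (F : Set (Sym2 V)) {P : G.Walk x y}
    (hP : P.length = G.dist x y) : cutPotential F P x = -crossCount F P := by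
  have hrev : P.reverse.length = G.dist y x := by rw [length_reverse, hP, dist_comm]
  rw [← crossCount_reverse, ← cutPotential_end_of_length_eq_dist F hrev, cutPotential_reverse,
    neg_neg]

theorem IsThetaClosed.crossCount_le_of_length_eq_dist {F : Set (Sym2 V)} (hF : IsThetaClosed G F)
    {P : G.Walk x y} (hP : P.length = G.dist x y) (W : G.Walk x y) :
    crossCount F P ≤ crossCount F W := by
  have := hF.cutPotential_sub_le_crossCount P W
  rw [cutPotential_end_of_length_eq_dist F hP, cutPotential_start_of_length_eq_dist F hP] at this
  omega

theorem connectedComponentMk_deleteEdges_eq_of_notMem (F : Set (Sym2 V)) {a b : V}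
    (h : G.Adj a b) (hab : s(a, b) ∉ F) :
    (G.deleteEdges F).connectedComponentMk a = (G.deleteEdges F).connectedComponentMk b :=
  ConnectedComponent.sound ((deleteEdges_adj ..).mpr ⟨h, hab⟩).reachable

theorem crossCount_mapLe_deleteEdges (F : Set (Sym2 V)) {a b : V}
    (p : (G.deleteEdges F).Walk a b) : crossCount F (p.mapLe (G.deleteEdges_le F)) = 0 := by
  rw [crossCount, edges_mapLe_eq_edges, List.countP_eq_zero]
  intro e he
  have := p.edges_subset_edgeSet he
  rw [edgeSet_deleteEdges] at this
  simpa using this.2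

theorem exists_quotientGraph_walk_length_le_crossCount (F : Set (Sym2 V)) {a b : V}
    (W : G.Walk a b) : ∃ q : (quotientGraph G F).Walk
      ((G.deleteEdges F).connectedComponentMk a) ((G.deleteEdges F).connectedComponentMk b),
      q.length ≤ crossCount F W := by
  induction W with
  | nil => exact ⟨nil, le_rfl⟩
  | @cons a w b h W ih =>
    obtain ⟨q, hq⟩ := ih
    rw [crossCount_cons]
    by_cases hc :
        (G.deleteEdges F).connectedComponentMk a = (G.deleteEdges F).connectedComponentMk w
    · exact ⟨q.copy hc.symm rfl, by rw [length_copy]; omega⟩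
    · have hmem : s(a, w) ∈ F :=
        by_contra fun hnot => hc (connectedComponentMk_deleteEdges_eq_of_notMem F h hnot)
      have hadj : (quotientGraph G F).Adj _ _ := ⟨hc, a, w, rfl, rfl, h⟩
      exact ⟨cons hadj q, by rw [if_pos hmem, length_cons]; omega⟩

theorem exists_walk_crossCount_le_quotientGraph_walk_length (F : Set (Sym2 V))
    {X Y : (G.deleteEdges F).ConnectedComponent} (q : (quotientGraph G F).Walk X Y) {a b : V}
    (ha : (G.deleteEdges F).connectedComponentMk a = X)
    (hb : (G.deleteEdges F).connectedComponentMk b = Y) :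
    ∃ W : G.Walk a b, crossCount F W ≤ q.length := by
  induction q generalizing a with
  | nil =>
    obtain ⟨p⟩ := ConnectedComponent.exact (ha.trans hb.symm)
    exact ⟨p.mapLe (G.deleteEdges_le F), (crossCount_mapLe_deleteEdges F p).le⟩
  | cons hXZ q ih =>
    obtain ⟨c, d, hc, hd, hcd⟩ := hXZ.2
    obtain ⟨p⟩ := ConnectedComponent.exact (ha.trans hc.symm)
    obtain ⟨W, hW⟩ := ih hd hb
    refine ⟨(p.mapLe (G.deleteEdges_le F)).append (cons hcd W), ?_⟩
    rw [crossCount_append, crossCount_mapLe_deleteEdges, crossCount_cons, length_cons]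
    split_ifs <;> omega

theorem IsThetaClosed.quotientGraph_dist_eq_crossCount {F : Set (Sym2 V)}
    (hF : IsThetaClosed G F) {P : G.Walk x y} (hP : P.length = G.dist x y) :
    (quotientGraph G F).dist ((G.deleteEdges F).connectedComponentMk x)
      ((G.deleteEdges F).connectedComponentMk y) = crossCount F P := by
  obtain ⟨q, hq⟩ := exists_quotientGraph_walk_length_le_crossCount F P
  obtain ⟨q', hq'⟩ := q.reachable.exists_walk_length_eq_dist
  obtain ⟨W, hW⟩ := exists_walk_crossCount_le_quotientGraph_walk_length F q' rfl rfl
  have hPW := hF.crossCount_le_of_length_eq_dist hP W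
  have hq'le := dist_le q
  omega

theorem IsThetaClosed.dist_add_quotientGraph_dist {F : Set (Sym2 V)} (hF : IsThetaClosed G F)
    (hG : G.Connected) {u v : V} (huv : G.Adj u v) (he : s(u, v) ∈ F) (x : V) :
    G.dist x u + (quotientGraph G F).dist ((G.deleteEdges F).connectedComponentMk x)
        ((G.deleteEdges F).connectedComponentMk v) =
      G.dist x v + (quotientGraph G F).dist ((G.deleteEdges F).connectedComponentMk x)
        ((G.deleteEdges F).connectedComponentMk u) := by
  obtain ⟨Pu, hPu⟩ := hG.exists_walk_length_eq_dist x u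
  obtain ⟨Pv, hPv⟩ := hG.exists_walk_length_eq_dist x v
  have hu := hF.compl.crossCount_le_of_length_eq_dist hPu (Pv.concat huv.symm)
  have hv := hF.compl.crossCount_le_of_length_eq_dist hPv (Pu.concat huv)
  rw [crossCount_concat, if_neg (by simpa [Sym2.eq_swap] using he)] at hu
  rw [crossCount_concat, if_neg (by simpa using he)] at hv
  have hlu := crossCount_add_crossCount_compl F Pu
  have hlv := crossCount_add_crossCount_compl F Pv
  rw [hF.quotientGraph_dist_eq_crossCount hPu, hF.quotientGraph_dist_eq_crossCount hPv]
  omega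

theorem IsThetaClosed.setOf_dist_lt_eq_iUnion {F : Set (Sym2 V)} (hF : IsThetaClosed G F)
    (hG : G.Connected) {u v : V} (huv : G.Adj u v) (he : s(u, v) ∈ F) :
    {x : V | G.dist x u < G.dist x v} =
      ⋃ X ∈ {X : (G.deleteEdges F).ConnectedComponent |
          (quotientGraph G F).dist X ((G.deleteEdges F).connectedComponentMk u) <
            (quotientGraph G F).dist X ((G.deleteEdges F).connectedComponentMk v)},
        {x : V | (G.deleteEdges F).connectedComponentMk x = X} := by
  ext x
  have := hF.dist_add_quotientGraph_dist hG huv he x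
  simp only [Set.mem_iUnion, exists_prop, Set.mem_ofPred_eq, exists_eq_right']
  omega

end

theorem N_eq_iUnion_components_general {V : Type*} (G : SimpleGraph V)
    (hG : G.Connected) {k : ℕ} (F : Fin k → Set (Sym2 V))
    (hF : IsCPartition G F) (i : Fin k) (u v : V) (he : s(u, v) ∈ F i) :
    ({x : V | G.dist x u < G.dist x v} =
      ⋃ X ∈ {X : (G.deleteEdges (F i)).ConnectedComponent |
          (quotientGraph G (F i)).dist X
              ((G.deleteEdges (F i)).connectedComponentMk u) <
            (quotientGraph G (F i)).dist X
              ((G.deleteEdges (F i)).connectedComponentMk v)},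
        {x : V | (G.deleteEdges (F i)).connectedComponentMk x = X}) ∧
    ({x : V | G.dist x v < G.dist x u} =
      ⋃ X ∈ {X : (G.deleteEdges (F i)).ConnectedComponent |
          (quotientGraph G (F i)).dist X
              ((G.deleteEdges (F i)).connectedComponentMk v) <
            (quotientGraph G (F i)).dist X
              ((G.deleteEdges (F i)).connectedComponentMk u)},
        {x : V | (G.deleteEdges (F i)).connectedComponentMk x = X}) := by
  have hFi := hF.isThetaClosed i
  have huv : G.Adj u v := hF.1.1 i he
  exact ⟨hFi.setOf_dist_lt_eq_iUnion hG huv he,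
    hFi.setOf_dist_lt_eq_iUnion hG huv.symm (Sym2.eq_swap ▸ he)⟩

/-- if `{F₁, …, F_k}` is a c-partition of the edge set of a finite
connected graph `G` and `e = uv ∈ F_i`, then `N_u(e|G)` is the union of the
vertex sets of the components in `N_U(E|G_i)`, and symmetrically for `v`,
where `U = ℓ_i(u)`, `V = ℓ_i(v)` and `E = UV` in `G_i = G/F_i`. -/
theorem N_eq_iUnion_components {V : Type*} [Fintype V] (G : SimpleGraph V)
    (hG : G.Connected) {k : ℕ} (F : Fin k → Set (Sym2 V))
    (hF : IsCPartition G F) (i : Fin k) (u v : V) (he : s(u, v) ∈ F i) :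
    ({x : V | G.dist x u < G.dist x v} =
      ⋃ X ∈ {X : (G.deleteEdges (F i)).ConnectedComponent |
          (quotientGraph G (F i)).dist X
              ((G.deleteEdges (F i)).connectedComponentMk u) <
            (quotientGraph G (F i)).dist X
              ((G.deleteEdges (F i)).connectedComponentMk v)},
        {x : V | (G.deleteEdges (F i)).connectedComponentMk x = X}) ∧
    ({x : V | G.dist x v < G.dist x u} =
      ⋃ X ∈ {X : (G.deleteEdges (F i)).ConnectedComponent |
          (quotientGraph G (F i)).dist X
              ((G.deleteEdges (F i)).connectedComponentMk v) <
            (quotientGraph G (F i)).dist X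
              ((G.deleteEdges (F i)).connectedComponentMk u)},
        {x : V | (G.deleteEdges (F i)).connectedComponentMk x = X}) :=
  N_eq_iUnion_components_general G hG F hF i u v he
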